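/- Every fixed point of the scaled softmax S_β lies on one of the line segments L_J for some J ⊆ [n], i.e., Fix(S_β) ⊆ ⋃_{J⊆[n]} L_J. -/

import Mathlib

open Real Finset

noncomputable def softmax (n : ℕ) (β : ℝ) (x : Fin n → ℝ) : Fin n → ℝ :=
  fun j => Real.exp (β * x j) / ∑ i, Real.exp (β * x i)

/-
At a fixed point every coordinate solves `exp (β t) = Z t` with `Z = ∑ i, exp (β x i)`. Since
`t ↦ exp (β t) - Z t` is strictly convex, it has at most two zeros, so the coordinates take at most
two values: the minimal one on some set `J` and another one off `J`. The constraint `∑ x = 1`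
then pins the second value to `(1 - |J| c) / (n - |J|)`.
-/

theorem strictConvexOn_exp_mul {β : ℝ} (hβ : β ≠ 0) :
    StrictConvexOn ℝ Set.univ fun t => exp (β * t) := by
  refine ⟨convex_univ, fun t _ u _ htu a b ha hb hab => ?_⟩
  have hβtu : β * t ≠ β * u := by simpa [hβ] using htu
  simpa only [smul_eq_mul, mul_add, mul_left_comm β] using
    strictConvexOn_exp.2 (Set.mem_univ _) (Set.mem_univ _) hβtu ha hb hab

theorem eq_div_of_sum_eq_one_of_const_on_compl {ι : Type*} [Fintype ι] {x : ι → ℝ}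
    (hsum : ∑ i, x i = 1) {J : Finset ι} {c : ℝ} (hJ : ∀ i ∈ J, x i = c) {j : ι} (hj : j ∉ J)
    (hJc : ∀ i ∉ J, x i = x j) :
    x j = (1 - J.card * c) / (Fintype.card ι - J.card) := by
  classical
  have hcard : J.card < Fintype.card ι := card_lt_univ_of_notMem hj
  have hsplit : (J.card : ℝ) * c + ((Fintype.card ι : ℝ) - J.card) * x j = 1 := by
    rw [← hsum, ← sum_add_sum_compl J, sum_congr rfl hJ,
      sum_congr rfl fun i hi => hJc i (mem_compl.mp hi), sum_const, sum_const, card_compl,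
      nsmul_eq_mul, nsmul_eq_mul, Nat.cast_sub hcard.le]
  have hden : (Fintype.card ι : ℝ) - J.card ≠ 0 := sub_ne_zero.mpr (by exact_mod_cast hcard.ne')
  rw [eq_div_iff hden]
  linarith

section softmax

variable {n : ℕ} {β : ℝ} {x : Fin n → ℝ}

theorem sum_softmax [NeZero n] (β : ℝ) (x : Fin n → ℝ) : ∑ j, softmax n β x j = 1 := by
  have hZ : 0 < ∑ i, exp (β * x i) := sum_pos (fun i _ => exp_pos _) univ_nonempty
  simp only [softmax, ← sum_div, div_self hZ.ne']

theorem exp_mul_eq_sum_mul_of_softmax_eq_self (hfix : softmax n β x = x) (j : Fin n) :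
    exp (β * x j) = (∑ i, exp (β * x i)) * x j := by
  have hZ : 0 < ∑ i, exp (β * x i) := sum_pos (fun i _ => exp_pos _) ⟨j, mem_univ j⟩
  have hj := congrFun hfix j
  rw [softmax, div_eq_iff hZ.ne'] at hj
  rw [hj, mul_comm]

theorem eq_of_lt_of_lt_of_softmax_eq_self (hβ : β ≠ 0) (hfix : softmax n β x = x) {i j k : Fin n}
    (hij : x i < x j) (hik : x i < x k) : x j = x k := by
  set g : ℝ → ℝ := fun t => exp (β * t) - (∑ i, exp (β * x i)) * t
  have hg : StrictConvexOn ℝ Set.univ g :=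
    (strictConvexOn_exp_mul hβ).sub_concaveOn
      ((LinearMap.mul ℝ ℝ (∑ i, exp (β * x i))).concaveOn convex_univ)
  have hzero : ∀ l, g (x l) = 0 := fun l =>
    sub_eq_zero.mpr (exp_mul_eq_sum_mul_of_softmax_eq_self hfix l)
  have no_three_levels : ∀ {a b c : Fin n}, x a < x b → x b < x c → False := by
    intro a b c hab hbc
    have hmem : x b ∈ openSegment ℝ (x a) (x c) := by
      rw [openSegment_eq_Ioo (hab.trans hbc)]
      exact ⟨hab, hbc⟩
    have := hg.lt_on_openSegment (Set.mem_univ _) (Set.mem_univ _) (hab.trans hbc).ne hmem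
    simp only [hzero, max_self, lt_self_iff_false] at this
  rcases lt_trichotomy (x j) (x k) with hjk | hjk | hjk
  · exact (no_three_levels hij hjk).elim
  · exact hjk
  · exact (no_three_levels hik hjk).elim

end softmax

theorem softmax_fixed_points_on_lines_general (n : ℕ) (β : ℝ) (hβ : 0 < β)
    (x : Fin n → ℝ) (hfix : softmax n β x = x) :
    ∃ (J : Finset (Fin n)) (c : ℝ), (∀ j ∈ J, x j = c) ∧
      (∀ j ∉ J, x j = (1 - J.card * c) / (n - J.card)) := by
  rcases Nat.eq_zero_or_pos n with rfl | hn
  · exact ⟨∅, 0, by simp, fun j => j.elim0⟩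
  have : NeZero n := NeZero.of_pos hn
  obtain ⟨j₀, hmin⟩ := Finite.exists_min x
  have hsum : ∑ j, x j = 1 := hfix ▸ sum_softmax β x
  refine ⟨univ.filter (x · = x j₀), x j₀, fun j hj => (mem_filter.mp hj).2, fun j hj => ?_⟩
  have above : ∀ {i}, i ∉ univ.filter (x · = x j₀) → x j₀ < x i := fun hi =>
    (hmin _).lt_of_ne fun h => hi (mem_filter.mpr ⟨mem_univ _, h.symm⟩)
  simpa using eq_div_of_sum_eq_one_of_const_on_compl hsum (fun i hi => (mem_filter.mp hi).2) hj
    fun i hi => eq_of_lt_of_lt_of_softmax_eq_self hβ.ne' hfix (above hi) (above hj)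

/-- Every fixed point of the scaled softmax lies on one of the line segments L_J:
its coordinates take a common value c on some J and the value (1-|J|c)/(n-|J|) off J. -/
theorem softmax_fixed_points_on_lines (n : ℕ) (hn : 0 < n) (β : ℝ) (hβ : 0 < β)
    (x : Fin n → ℝ) (hfix : softmax n β x = x) :
    ∃ (J : Finset (Fin n)) (c : ℝ), (∀ j ∈ J, x j = c) ∧
      (∀ j ∉ J, x j = (1 - J.card * c) / (n - J.card)) :=
  softmax_fixed_points_on_lines_general n β hβ x hfix
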